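/- Let Q = Γ ×_N Γ be a fiber product with N ⊴ Γ, and suppose the centralizer of N in Γ is trivial. Then the centralizer in Q of the subgroup N_L = N × {1} equals N_R = {1} × N. -/

import Mathlib

/-- The fiber product `Δ ×_N Δ = {(δn, δ) : δ ∈ Δ, n ∈ N}` as a subgroup of `Δ × Δ`. -/
def fiberProduct (Δ : Type*) [Group Δ] (N : Subgroup Δ) [hN : N.Normal] :
    Subgroup (Δ × Δ) where
  carrier := {p : Δ × Δ | ∃ δ n, n ∈ N ∧ p = (δ * n, δ)}
  one_mem' := ⟨1, 1, N.one_mem, by ext <;> simp⟩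
  mul_mem' := by
    rintro _ _ ⟨δ, n, hn, rfl⟩ ⟨δ', n', hn', rfl⟩
    refine ⟨δ * δ', (δ'⁻¹ * n * δ') * n',
      N.mul_mem (by simpa using hN.conj_mem n hn δ'⁻¹) hn', ?_⟩
    have h1 : (δ * n) * (δ' * n') = (δ * δ') * ((δ'⁻¹ * n * δ') * n') := by group
    simp [Prod.ext_iff, h1]
  inv_mem' := by
    rintro _ ⟨δ, n, hn, rfl⟩
    refine ⟨δ⁻¹, δ * n⁻¹ * δ⁻¹, by simpa using hN.conj_mem n⁻¹ (N.inv_mem hn) δ, ?_⟩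
    have h1 : (δ * n)⁻¹ = δ⁻¹ * (δ * n⁻¹ * δ⁻¹) := by group
    simp [Prod.ext_iff, h1]

theorem Prod.commute_mk_one_iff {M M' : Type*} [Monoid M] [Monoid M'] {p : M × M'} {m : M} :
    Commute p (m, 1) ↔ Commute p.1 m := by
  simp only [Prod.commute_iff, Commute.one_right, and_true]

theorem fiberProduct.mem_iff {Δ : Type*} [Group Δ] {N : Subgroup Δ} [N.Normal] {p : Δ × Δ} :
    p ∈ fiberProduct Δ N ↔ p.2⁻¹ * p.1 ∈ N := by
  constructor
  · rintro ⟨δ, n, hn, rfl⟩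
    simpa using hn
  · intro h
    exact ⟨p.2, p.2⁻¹ * p.1, h, by simp⟩

/-- If the centralizer of `N` in `Γ` is trivial, then the centralizer in
`Q = Γ ×_N Γ` of `N_L = N × {1}` equals `N_R = {1} × N`. -/
theorem centralizer_of_NL_in_fiberProduct {Γ : Type*} [Group Γ]
    (N : Subgroup Γ) [N.Normal]
    (hcent : ∀ γ : Γ, (∀ n ∈ N, γ * n = n * γ) → γ = 1) :
    ∀ q ∈ fiberProduct Γ N,
      ((∀ n ∈ N, q * ((n, 1) : Γ × Γ) = ((n, 1) : Γ × Γ) * q) ↔ ∃ n ∈ N, q = ((1 : Γ), n)) := by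
  intro q hq
  simp only [← commute_iff_eq, Prod.commute_mk_one_iff]
  constructor
  · intro hcomm
    have hq₁ : q.1 = 1 := hcent q.1 hcomm
    rw [fiberProduct.mem_iff, hq₁, mul_one, inv_mem_iff] at hq
    exact ⟨q.2, hq, Prod.ext hq₁ rfl⟩
  · rintro ⟨n, -, rfl⟩ m -
    exact Commute.one_left m
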